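/- Uniform bound on optimal controls in the mean field setting: for every μ ∈ P(Γ_C), every x ∈ Σ and every optimal trajectory (y,α) ∈ Γ^{μ,opt}[x], one has ‖α‖_{L²(0,T)}² ≤ 4K(T+1), where K is the common bound on ‖L[m]‖_∞ and ‖G[m]‖_∞. In particular there exists a constant C̃ (independent of μ and x) such that every optimal control has L²-norm at most C̃. -/

import Mathlib

open MeasureTheory Set Filter Topology

noncomputable section

/-- Squared Euclidean norm on ℝ². -/
def sq2 (v : ℝ × ℝ) : ℝ := v.1 ^ 2 + v.2 ^ 2

/-- Euclidean norm on ℝ². -/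
def enorm2 (v : ℝ × ℝ) : ℝ := Real.sqrt (sq2 v)

/-- `(y, α)` is an admissible trajectory for the Grushin-type dynamics on `[t,T]`,
starting from `x` and constrained to the set `S`. -/
def Admissible (ν : ℝ) (S : Set (ℝ × ℝ)) (t T : ℝ) (x : ℝ × ℝ)
    (y α : ℝ → ℝ × ℝ) : Prop :=
  Measurable α ∧
  IntervalIntegrable (fun τ => (α τ).1) volume t T ∧
  IntervalIntegrable (fun τ => |(y τ).1| ^ ν * (α τ).2) volume t T ∧
  (∀ s ∈ Icc t T, (y s).1 = x.1 + ∫ τ in t..s, (α τ).1) ∧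
  (∀ s ∈ Icc t T, (y s).2 = x.2 + ∫ τ in t..s, |(y τ).1| ^ ν * (α τ).2) ∧
  (∀ s ∈ Icc t T, y s ∈ S)

/-- `α ∈ L²(t,T)`. -/
def InL2 (α : ℝ → ℝ × ℝ) (t T : ℝ) : Prop :=
  IntervalIntegrable (fun τ => sq2 (α τ)) volume t T

/-- An admissible pair on `[0,T]` with square-integrable control. -/
def AdmPair (ν : ℝ) (S : Set (ℝ × ℝ)) (T : ℝ) (x : ℝ × ℝ) (y α : ℝ → ℝ × ℝ) : Prop :=
  Admissible ν S 0 T x y α ∧ InL2 α 0 T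

/-- The space of curves `C([0,T]; ℝ²)` (with the uniform topology) carries the Borel
σ-algebra. -/
instance (T : ℝ) : MeasurableSpace C(Icc (0 : ℝ) T, ℝ × ℝ) := borel _
instance (T : ℝ) : BorelSpace C(Icc (0 : ℝ) T, ℝ × ℝ) := ⟨rfl⟩

/-- Extension of a curve on `[0,T]` to all of `ℝ` (constant outside `[0,T]`). -/
def extCurve (T : ℝ) (hT : 0 ≤ T) (f : C(Icc (0 : ℝ) T, ℝ × ℝ)) : ℝ → ℝ × ℝ :=
  fun s => f (projIcc 0 T hT s)

/-- `m^μ(t) = e_t ♯ μ`, the image of `μ` by the evaluation map at time `t`. -/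
def mOf (T : ℝ) (hT : 0 ≤ T) (μ : ProbabilityMeasure C(Icc (0 : ℝ) T, ℝ × ℝ)) (t : ℝ) :
    ProbabilityMeasure (ℝ × ℝ) :=
  μ.map (f := fun f => extCurve T hT f t)
    (ContinuousEvalConst.continuous_eval_const _).measurable.aemeasurable

/-- `Γ_C[x]`: curves in `C([0,T];ℝ²)` admissible from `x`, with `‖y‖_∞ ≤ C` and
`‖α‖_{L²} ≤ C`. -/
def GammaCx (ν : ℝ) (S : Set (ℝ × ℝ)) (T : ℝ) (hT : 0 ≤ T) (Cb : ℝ) (x : ℝ × ℝ) :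
    Set C(Icc (0 : ℝ) T, ℝ × ℝ) :=
  {f | ∃ α : ℝ → ℝ × ℝ, AdmPair ν S T x (extCurve T hT f) α ∧
    (∀ s ∈ Icc (0 : ℝ) T, enorm2 (extCurve T hT f s) ≤ Cb) ∧
    Real.sqrt (∫ τ in (0 : ℝ)..T, sq2 (α τ)) ≤ Cb}

/-- `Γ_C = ⋃_{x ∈ Σ} Γ_C[x]`. -/
def GammaCset (ν : ℝ) (S : Set (ℝ × ℝ)) (T : ℝ) (hT : 0 ≤ T) (Cb : ℝ) :
    Set C(Icc (0 : ℝ) T, ℝ × ℝ) :=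
  ⋃ x ∈ S, GammaCx ν S T hT Cb x

/-- The cost `J^μ(x;(y,α))` associated with `μ ∈ P(Γ_C)`. -/
def costMu (T : ℝ) (hT : 0 ≤ T)
    (L : ProbabilityMeasure (ℝ × ℝ) → BoundedContinuousFunction ((ℝ × ℝ) × ℝ) ℝ)
    (G : ProbabilityMeasure (ℝ × ℝ) → BoundedContinuousFunction (ℝ × ℝ) ℝ)
    (μ : ProbabilityMeasure C(Icc (0 : ℝ) T, ℝ × ℝ)) (y α : ℝ → ℝ × ℝ) : ℝ :=
  (∫ τ in (0 : ℝ)..T, (L (mOf T hT μ τ) (y τ, τ) + sq2 (α τ) / 2)) +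
    G (mOf T hT μ T) (y T)

/-- `Γ^{μ,opt}[x]`: admissible pairs from `x` with finite cost minimizing `J^μ(x;·)`. -/
def GammaMuOpt (ν : ℝ) (S : Set (ℝ × ℝ)) (T : ℝ) (hT : 0 ≤ T)
    (L : ProbabilityMeasure (ℝ × ℝ) → BoundedContinuousFunction ((ℝ × ℝ) × ℝ) ℝ)
    (G : ProbabilityMeasure (ℝ × ℝ) → BoundedContinuousFunction (ℝ × ℝ) ℝ)
    (μ : ProbabilityMeasure C(Icc (0 : ℝ) T, ℝ × ℝ)) (x : ℝ × ℝ) :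
    Set ((ℝ → ℝ × ℝ) × (ℝ → ℝ × ℝ)) :=
  {p | AdmPair ν S T x p.1 p.2 ∧
    ∀ q : (ℝ → ℝ × ℝ) × (ℝ → ℝ × ℝ), AdmPair ν S T x q.1 q.2 →
      costMu T hT L G μ p.1 p.2 ≤ costMu T hT L G μ q.1 q.2}

/-- `Γ_C^{μ,opt}[x]`: curves of `Γ_C[x]` which are optimal for `J^μ(x;·)`. -/
def GammaCMuOpt (ν : ℝ) (S : Set (ℝ × ℝ)) (T : ℝ) (hT : 0 ≤ T) (Cb : ℝ)
    (L : ProbabilityMeasure (ℝ × ℝ) → BoundedContinuousFunction ((ℝ × ℝ) × ℝ) ℝ)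
    (G : ProbabilityMeasure (ℝ × ℝ) → BoundedContinuousFunction (ℝ × ℝ) ℝ)
    (μ : ProbabilityMeasure C(Icc (0 : ℝ) T, ℝ × ℝ)) (x : ℝ × ℝ) :
    Set C(Icc (0 : ℝ) T, ℝ × ℝ) :=
  {f | f ∈ GammaCx ν S T hT Cb x ∧
    ∃ α : ℝ → ℝ × ℝ, (extCurve T hT f, α) ∈ GammaMuOpt ν S T hT L G μ x}

/-- The (topological) support of a measure. -/
def msupp {Ω : Type*} [TopologicalSpace Ω] [MeasurableSpace Ω] (m : Measure Ω) : Set Ω :=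
  {ω | ∀ U : Set Ω, IsOpen U → ω ∈ U → m U ≠ 0}

/-- `P_{m₀}(Γ_C)`: probability measures carried by `Γ_C` whose image at time `0` is `m₀`. -/
def Pm0 (ν : ℝ) (S : Set (ℝ × ℝ)) (T : ℝ) (hT : 0 ≤ T) (Cb : ℝ)
    (m₀ : ProbabilityMeasure (ℝ × ℝ)) :
    Set (ProbabilityMeasure C(Icc (0 : ℝ) T, ℝ × ℝ)) :=
  {μ | μ.toMeasure (GammaCset ν S T hT Cb) = 1 ∧
    μ.toMeasure.map (fun f => extCurve T hT f 0) = m₀.toMeasure}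

/-- Standing assumption (iii): at every point of `Σ`, either the approximation property (a)
of admissible trajectories holds, or (b) the point is unreachable. -/
def AssumptionIII (ν : ℝ) (S : Set (ℝ × ℝ)) (T : ℝ) : Prop :=
  ∀ x ∈ S,
    (∀ y α : ℝ → ℝ × ℝ, AdmPair ν S T x y α →
      ∀ xs : ℕ → ℝ × ℝ, (∀ n, xs n ∈ S) → Tendsto xs atTop (𝓝 x) →
        ∃ ys as : ℕ → ℝ → ℝ × ℝ,
          (∀ n, AdmPair ν S T (xs n) (ys n) (as n)) ∧
          TendstoUniformlyOn ys y atTop (Icc 0 T) ∧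
          Tendsto (fun n => ∫ τ in (0 : ℝ)..T, sq2 (as n τ)) atTop
            (𝓝 (∫ τ in (0 : ℝ)..T, sq2 (α τ)))) ∨
    (∀ xb ∈ S \ {x}, ¬ ∃ y α : ℝ → ℝ × ℝ, AdmPair ν S T xb y α ∧ y T = x)

/-!
Comparing an optimal pair with the constant trajectory at `x` driven by the zero control, which is
admissible because `x ∈ Σ`, gives `½‖α‖² - K(T+1) ≤ J^μ(x;(y,α)) ≤ J^μ(x;(x,0)) ≤ K(T+1)`.
The only analytic input is that the running cost `τ ↦ L[m^μ(τ)](y(τ),τ)` is integrable, which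
follows from the continuity of `L`, of `y` and of `t ↦ m^μ(t)`.
-/

lemma MeasureTheory.ProbabilityMeasure.continuous_map_of_continuous {Ω E P : Type*}
    [TopologicalSpace Ω] [MeasurableSpace Ω] [TopologicalSpace E] [MeasurableSpace E]
    [BorelSpace E] [TopologicalSpace.PseudoMetrizableSpace E] [TopologicalSpace P]
    [FirstCountableTopology P]
    (μ : ProbabilityMeasure Ω) (F : P → Ω → E) (hF : ∀ ω, Continuous fun t => F t ω)
    (hFm : ∀ t, Measurable (F t)) :
    Continuous fun t => μ.map (hFm t).aemeasurable := by
  refine continuous_iff_continuousAt.2 fun t₀ => ?_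
  rw [ContinuousAt, ProbabilityMeasure.tendsto_iff_forall_integral_tendsto]
  intro g
  have integral_map_eq : ∀ t, ∫ e, g e ∂(μ.map (hFm t).aemeasurable : Measure E) =
      ∫ ω, g (F t ω) ∂(μ : Measure Ω) := fun t =>
    integral_map (hFm t).aemeasurable g.continuous.aestronglyMeasurable
  simp only [integral_map_eq]
  refine (continuous_of_dominated (bound := fun _ => ‖g‖) (fun t => ?_)
    (fun t => .of_forall fun ω => g.norm_coe_le_norm _) (integrable_const _)
    (.of_forall fun ω => g.continuous.comp (hF ω))).continuousAt
  exact (g.continuous.measurable.comp (hFm t)).aestronglyMeasurable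

lemma continuous_mOf (T : ℝ) (hT : 0 ≤ T) (μ : ProbabilityMeasure C(Icc (0 : ℝ) T, ℝ × ℝ)) :
    Continuous (mOf T hT μ) :=
  ProbabilityMeasure.continuous_map_of_continuous μ (fun t f => extCurve T hT f t)
    (fun f => f.continuous.comp continuous_projIcc)
    (fun _ => (ContinuousEvalConst.continuous_eval_const _).measurable)

lemma Admissible.continuousOn {ν : ℝ} {S : Set (ℝ × ℝ)} {t T : ℝ} {x : ℝ × ℝ}
    {y α : ℝ → ℝ × ℝ} (h : Admissible ν S t T x y α) (htT : t ≤ T) :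
    ContinuousOn y (Icc t T) := by
  obtain ⟨-, hα₁, hα₂, hy₁, hy₂, -⟩ := h
  have primitive {f : ℝ → ℝ} (hf : IntervalIntegrable f volume t T) :
      ContinuousOn (fun s => ∫ τ in t..s, f τ) (Icc t T) := by
    simpa [uIcc_of_le htT] using
      intervalIntegral.continuousOn_primitive_interval' hf left_mem_uIcc
  exact ((continuousOn_const.add (primitive hα₁)).congr hy₁).prodMk
    ((continuousOn_const.add (primitive hα₂)).congr hy₂)

lemma admPair_const {ν : ℝ} {S : Set (ℝ × ℝ)} {T : ℝ} {x : ℝ × ℝ} (hx : x ∈ S) :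
    AdmPair ν S T x (fun _ => x) 0 := by
  refine ⟨⟨measurable_const, ?_, ?_, ?_, ?_, fun _ _ => hx⟩, ?_⟩ <;>
    simp [InL2, sq2, intervalIntegrable_const]

section Cost

variable {T : ℝ} (hT : 0 ≤ T)
  {L : ProbabilityMeasure (ℝ × ℝ) → BoundedContinuousFunction ((ℝ × ℝ) × ℝ) ℝ}
  {G : ProbabilityMeasure (ℝ × ℝ) → BoundedContinuousFunction (ℝ × ℝ) ℝ}
  {K : ℝ}
  (μ : ProbabilityMeasure C(Icc (0 : ℝ) T, ℝ × ℝ))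

lemma abs_integral_runningCost_le (hL : ∀ m, ‖L m‖ ≤ K) (z : ℝ → ℝ × ℝ) :
    |∫ τ in (0 : ℝ)..T, L (mOf T hT μ τ) (z τ, τ)| ≤ K * T := by
  simpa [abs_of_nonneg hT] using
    intervalIntegral.norm_integral_le_of_norm_le_const (a := 0) (b := T)
      fun τ _ => ((L (mOf T hT μ τ)).norm_coe_le_norm (z τ, τ)).trans (hL _)

lemma costMu_const_zero_le (hL : ∀ m, ‖L m‖ ≤ K) (hG : ∀ m, ‖G m‖ ≤ K) (x : ℝ × ℝ) :
    costMu T hT L G μ (fun _ => x) 0 ≤ K * (T + 1) := by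
  have running := abs_le.1 (abs_integral_runningCost_le hT μ hL fun _ => x)
  have terminal := abs_le.1 (((G (mOf T hT μ T)).norm_coe_le_norm x).trans (hG _))
  simp only [costMu, Pi.zero_apply, sq2, Prod.fst_zero, Prod.snd_zero, ne_eq,
    OfNat.ofNat_ne_zero, not_false_eq_true, zero_pow, add_zero, zero_div]
  linarith

lemma le_costMu (hL : ∀ m, ‖L m‖ ≤ K) (hG : ∀ m, ‖G m‖ ≤ K) (hLc : Continuous L)
    {ν : ℝ} {S : Set (ℝ × ℝ)} {x : ℝ × ℝ} {y α : ℝ → ℝ × ℝ} (hadm : AdmPair ν S T x y α) :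
    (∫ τ in (0 : ℝ)..T, sq2 (α τ)) / 2 - K * (T + 1) ≤ costMu T hT L G μ y α := by
  have running_cont : ContinuousOn (fun τ => L (mOf T hT μ τ) (y τ, τ)) (Icc 0 T) :=
    continuous_eval.comp_continuousOn (((hLc.comp (continuous_mOf T hT μ)).continuousOn).prodMk
      ((hadm.1.continuousOn hT).prodMk continuousOn_id))
  have running_int := (uIcc_of_le hT ▸ running_cont).intervalIntegrable (μ := volume)
  have running := abs_le.1 (abs_integral_runningCost_le hT μ hL y)
  have terminal := abs_le.1 (((G (mOf T hT μ T)).norm_coe_le_norm (y T)).trans (hG _))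
  rw [costMu, intervalIntegral.integral_add running_int (hadm.2.div_const 2),
    intervalIntegral.integral_div]
  linarith

end Cost

theorem optimal_controls_uniform_bound_general
    (T ν : ℝ) (hT : 0 < T)
    (S : Set (ℝ × ℝ))
    (Cb : ℝ)
    (L : ProbabilityMeasure (ℝ × ℝ) → BoundedContinuousFunction ((ℝ × ℝ) × ℝ) ℝ)
    (G : ProbabilityMeasure (ℝ × ℝ) → BoundedContinuousFunction (ℝ × ℝ) ℝ)
    (hLc : Continuous L)
    (K : ℝ) (hK : ∀ m : ProbabilityMeasure (ℝ × ℝ), ‖L m‖ ≤ K ∧ ‖G m‖ ≤ K) :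
    (∀ μ : ProbabilityMeasure C(Icc (0 : ℝ) T, ℝ × ℝ),
      μ.toMeasure (GammaCset ν S T hT.le Cb) = 1 →
      ∀ x ∈ S, ∀ y α : ℝ → ℝ × ℝ,
        (y, α) ∈ GammaMuOpt ν S T hT.le L G μ x →
          (∫ τ in (0 : ℝ)..T, sq2 (α τ)) ≤ 4 * K * (T + 1)) ∧
    ∃ Ct : ℝ, ∀ μ : ProbabilityMeasure C(Icc (0 : ℝ) T, ℝ × ℝ),
      μ.toMeasure (GammaCset ν S T hT.le Cb) = 1 →
      ∀ x ∈ S, ∀ y α : ℝ → ℝ × ℝ,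
        (y, α) ∈ GammaMuOpt ν S T hT.le L G μ x →
          Real.sqrt (∫ τ in (0 : ℝ)..T, sq2 (α τ)) ≤ Ct := by
  have hL m := (hK m).1
  have hG m := (hK m).2
  have bound : ∀ μ : ProbabilityMeasure C(Icc (0 : ℝ) T, ℝ × ℝ), ∀ x ∈ S, ∀ y α : ℝ → ℝ × ℝ,
      (y, α) ∈ GammaMuOpt ν S T hT.le L G μ x →
        (∫ τ in (0 : ℝ)..T, sq2 (α τ)) ≤ 4 * K * (T + 1) := by
    intro μ x hx y α ⟨hadm, hmin⟩
    have lower := le_costMu hT.le μ hL hG hLc hadm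
    have upper := costMu_const_zero_le hT.le μ hL hG x
    have optimal := hmin ((fun _ => x), 0) (admPair_const hx)
    linarith
  exact ⟨fun μ _ => bound μ, Real.sqrt (4 * K * (T + 1)),
    fun μ _ x hx y α hopt => Real.sqrt_le_sqrt (bound μ x hx y α hopt)⟩

/-- uniform bound on optimal controls in the mean field setting. -/
theorem optimal_controls_uniform_bound
    (T ν : ℝ) (hT : 0 < T) (hν : 0 < ν)
    (S : Set (ℝ × ℝ)) (hS : IsClosed S)
    (Cb : ℝ) (hCb : 0 < Cb)
    (L : ProbabilityMeasure (ℝ × ℝ) → BoundedContinuousFunction ((ℝ × ℝ) × ℝ) ℝ)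
    (G : ProbabilityMeasure (ℝ × ℝ) → BoundedContinuousFunction (ℝ × ℝ) ℝ)
    (hLc : Continuous L) (hGc : Continuous G)
    (K : ℝ) (hK : ∀ m : ProbabilityMeasure (ℝ × ℝ), ‖L m‖ ≤ K ∧ ‖G m‖ ≤ K) :
    (∀ μ : ProbabilityMeasure C(Icc (0 : ℝ) T, ℝ × ℝ),
      μ.toMeasure (GammaCset ν S T hT.le Cb) = 1 →
      ∀ x ∈ S, ∀ y α : ℝ → ℝ × ℝ,
        (y, α) ∈ GammaMuOpt ν S T hT.le L G μ x →
          (∫ τ in (0 : ℝ)..T, sq2 (α τ)) ≤ 4 * K * (T + 1)) ∧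
    ∃ Ct : ℝ, ∀ μ : ProbabilityMeasure C(Icc (0 : ℝ) T, ℝ × ℝ),
      μ.toMeasure (GammaCset ν S T hT.le Cb) = 1 →
      ∀ x ∈ S, ∀ y α : ℝ → ℝ × ℝ,
        (y, α) ∈ GammaMuOpt ν S T hT.le L G μ x →
          Real.sqrt (∫ τ in (0 : ℝ)..T, sq2 (α τ)) ≤ Ct :=
  optimal_controls_uniform_bound_general T ν hT S Cb L G hLc K hK
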